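/- arXiv:2502.13068 — 2 statements merged into one kernel-verified Lean document; each statement's English description precedes it below -/
import Mathlib

section
/- Let L_n be the n×n lower-triangular matrix with (i,j) entry (-1)^{i-j} C(i,j) for j ≤ i (indices from 0) and 0 otherwise, and let H_n(a) be the Hankel matrix of a sequence (a_n). Then L_n H_n(a) L_n^T is the Hankel matrix of the binomial transform (b_n) of (a_n), where b_n = Σ_{k=0}^n (-1)^{n-k} C(n,k) a_k. -/
/-!
Let `φ : R[X] → R` be the linear functional with `φ (X ^ k) = a k`, so that the Hankel matrix of
`a` is the Gram matrix `(φ (X ^ k * X ^ l))`. Row `i` of `L` is the coefficient vector of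
`(X - 1) ^ i`, hence `(L H Lᵀ) i j = φ ((X - 1) ^ i * (X - 1) ^ j) = φ ((X - 1) ^ (i + j))`,
and expanding `(X - 1) ^ m` binomially gives `φ ((X - 1) ^ m) = b m`.
-/

open Finset Polynomial

section MomentFunctional

variable {R : Type*} [CommRing R]

theorem Polynomial.sum_fin_monomial_coeff {S : Type*} [Semiring S] {n : ℕ} (p : S[X])
    (hp : p.natDegree < n) : ∑ k : Fin n, monomial k (p.coeff k) = p :=
  (Fin.sum_univ_eq_sum_range (fun k => monomial k (p.coeff k)) n).trans (as_sum_range' p n hp).symm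

theorem Polynomial.coeff_X_sub_one_pow (m k : ℕ) :
    ((X - 1 : R[X]) ^ m).coeff k = (-1) ^ (m - k) * (m.choose k : R) := by
  simpa [sub_eq_add_neg] using coeff_X_add_C_pow (-1 : R) m k

theorem Polynomial.natDegree_X_sub_one_pow_le (m : ℕ) : ((X - 1 : R[X]) ^ m).natDegree ≤ m := by
  compute_degree

noncomputable def momentFunctional (a : ℕ → R) : R[X] →ₗ[R] R :=
  lsum fun k => LinearMap.mulRight R (a k)

variable (a : ℕ → R)

@[simp]
theorem momentFunctional_monomial (k : ℕ) (c : R) :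
    momentFunctional a (monomial k c) = c * a k := by
  simp [momentFunctional]

theorem momentFunctional_sum_monomial_mul_sum_monomial {n : ℕ} (u v : Fin n → R) :
    momentFunctional a ((∑ k : Fin n, monomial k (u k)) * ∑ l : Fin n, monomial l (v l)) =
      ∑ k : Fin n, ∑ l : Fin n, u k * a (k + l) * v l := by
  simp only [Finset.sum_mul_sum, monomial_mul_monomial, map_sum, momentFunctional_monomial]
  exact sum_congr rfl fun _ _ => sum_congr rfl fun _ _ => by ring

theorem momentFunctional_X_sub_one_pow (m : ℕ) :
    momentFunctional a ((X - 1) ^ m) =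
      ∑ k ∈ range (m + 1), (-1) ^ (m - k) * (m.choose k : R) * a k := by
  conv_lhs => rw [as_sum_range' ((X - 1 : R[X]) ^ m) (m + 1)
    (Nat.lt_succ_of_le (natDegree_X_sub_one_pow_le m))]
  simp [coeff_X_sub_one_pow]

theorem Matrix.mul_hankel_mul_transpose_apply {n : ℕ} (L : Matrix (Fin n) (Fin n) R)
    (i j : Fin n) :
    (L * Matrix.of (fun k l : Fin n => a (k + l)) * L.transpose) i j =
      momentFunctional a
        ((∑ k : Fin n, monomial k (L i k)) * ∑ l : Fin n, monomial l (L j l)) := by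
  rw [momentFunctional_sum_monomial_mul_sum_monomial, sum_comm]
  simp [Matrix.mul_apply, Finset.sum_mul]

end MomentFunctional

theorem conjugation_by_L_gives_hankel_of_binomial_transform {R : Type*} [CommRing R]
    (a b : ℕ → R)
    (hb : ∀ n, b n = ∑ k ∈ Finset.range (n + 1),
      (-1 : R) ^ (n - k) * (n.choose k : R) * a k)
    (n : ℕ)
    (L : Matrix (Fin n) (Fin n) R)
    (hL : ∀ i j : Fin n, L i j =
      if (j : ℕ) ≤ i then (-1 : R) ^ ((i : ℕ) - j) * ((i : ℕ).choose j : R) else 0) :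
    L * (Matrix.of fun i j : Fin n => a (i + j)) * L.transpose =
      Matrix.of fun i j : Fin n => b (i + j) := by
  have hrow (i : Fin n) : ∑ k : Fin n, monomial k (L i k) = (X - 1 : R[X]) ^ (i : ℕ) := by
    conv_rhs => rw [← sum_fin_monomial_coeff ((X - 1 : R[X]) ^ (i : ℕ))
      ((natDegree_X_sub_one_pow_le _).trans_lt i.isLt)]
    refine sum_congr rfl fun k _ => ?_
    rw [hL, coeff_X_sub_one_pow]
    split_ifs with hki
    · rfl
    · rw [Nat.choose_eq_zero_of_lt (not_le.mp hki), Nat.cast_zero, mul_zero]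
  ext i j
  rw [Matrix.mul_hankel_mul_transpose_apply, hrow, hrow, ← pow_add,
    momentFunctional_X_sub_one_pow, Matrix.of_apply, hb]
end

section
/- Kronecker's rationality criterion (one direction): if f = Σ a_n x^n is the power series expansion of a rational function, then all but finitely many Hankel determinants det(a_{i+j})_{0≤i,j≤n-1} of f vanish. -/
/-!
If `f * Q = P` with `Q(0) ≠ 0`, then for `n > max(deg Q, deg P + 1)` the reversed coefficient
vector `(q_{n-1}, …, q_0)` of `Q` is a nonzero vector killed by the `n × n` Hankel matrix of `f`:
its `i`-th entry is the coefficient of `x^(i+n-1)` in `f * Q = P`, which is zero since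
`i + n - 1 > deg P`. Hence the Hankel determinant vanishes.
-/

open scoped Polynomial
open PowerSeries Finset Matrix

variable {R : Type*} [CommRing R]

def hankel (a : ℕ → R) (n : ℕ) : Matrix (Fin n) (Fin n) R :=
  Matrix.of fun i j => a (i + j)

theorem PowerSeries.coeff_mul_polynomial_eq_sum_range (f : R⟦X⟧) {Q : R[X]} {n m : ℕ}
    (hQ : Q.natDegree < n) (hnm : n ≤ m + 1) :
    coeff m (f * (Q : R⟦X⟧)) = ∑ k ∈ range n, coeff (m - k) f * Q.coeff k := by
  nth_rw 1 [Q.as_sum_range_C_mul_X_pow' hQ]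
  rw [← Polynomial.coeToPowerSeries.ringHom_apply, map_sum, mul_sum, map_sum]
  refine sum_congr rfl fun k hk => ?_
  have hkm : k ≤ m := by rw [mem_range] at hk; omega
  rw [map_mul Polynomial.coeToPowerSeries.ringHom, map_pow,
    Polynomial.coeToPowerSeries.ringHom_apply, Polynomial.coeToPowerSeries.ringHom_apply,
    Polynomial.coe_C, Polynomial.coe_X, mul_comm (C _), ← mul_assoc, coeff_mul_C,
    coeff_mul_X_pow', if_pos hkm]

theorem hankel_mulVec_reverse_coeff (a : ℕ → R) {Q : R[X]} {n : ℕ} (hQ : Q.natDegree < n)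
    (i : Fin n) :
    (hankel a n *ᵥ fun j => Q.coeff (n - 1 - j)) i = coeff (i + (n - 1)) (mk a * (Q : R⟦X⟧)) := by
  rw [coeff_mul_polynomial_eq_sum_range _ hQ (by omega), ← sum_range_reflect]
  simp only [mulVec, dotProduct, hankel, Matrix.of_apply, coeff_mk]
  rw [Fin.sum_univ_eq_sum_range (fun j => a (i + j) * Q.coeff (n - 1 - j))]
  refine sum_congr rfl fun j hj => ?_
  rw [mem_range] at hj
  congr 2
  omega

theorem det_hankel_eq_zero_of_mk_mul_eq [IsDomain R] {a : ℕ → R} {P Q : R[X]}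
    (hQ0 : Q.coeff 0 ≠ 0) (hPQ : mk a * (Q : R⟦X⟧) = P) {n : ℕ} (hQ : Q.natDegree < n)
    (hP : P.natDegree + 1 < n) : (hankel a n).det = 0 := by
  refine Matrix.exists_mulVec_eq_zero_iff.mp ⟨fun j => Q.coeff (n - 1 - j), ?_, ?_⟩
  · intro hv
    exact hQ0 (by simpa using congrFun hv ⟨n - 1, by omega⟩)
  · funext i
    rw [hankel_mulVec_reverse_coeff a hQ, hPQ, Polynomial.coeff_coe, Pi.zero_apply,
      Polynomial.coeff_eq_zero_of_natDegree_lt (by omega)]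

theorem kronecker_forward (a : ℕ → ℂ)
    (h : ∃ (P Q : Polynomial ℂ), Q.coeff 0 ≠ 0 ∧
      PowerSeries.mk a * (Q : PowerSeries ℂ) = (P : PowerSeries ℂ)) :
    ∀ᶠ n in Filter.atTop, Matrix.det (fun i j : Fin n => a (i + j)) = 0 := by
  obtain ⟨P, Q, hQ0, hPQ⟩ := h
  filter_upwards [Filter.eventually_gt_atTop (max Q.natDegree (P.natDegree + 1))] with n hn
  obtain ⟨hQ, hP⟩ := max_lt_iff.mp hn
  exact det_hankel_eq_zero_of_mk_mul_eq hQ0 hPQ hQ hP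
end
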